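/- arXiv:2106.07024 — 3 statements merged into one kernel-verified Lean document; each statement's English description precedes it below -/
import Mathlib

section
/- Under the assumption that (1/ε_n)_n grows sub-exponentially (i.e., (1/ε_n) is o(e^{rn}) for every r > 0) and P ≪ Q, eventually in n, the optimal Type II error exponent satisfies -(1/n) log β_n(ε_n) ≥ D(P‖Q) - C_X(P,Q)·√(2 ln(1/ε_n)/n). -/
/-! The likelihood-ratio test that accepts `P` when `∑ i, log (P xᵢ / Q xᵢ) ≥ n (D - δ)` has
Type II error at most `exp (-n (D - δ))`, because `Qⁿ = exp (-∑ i, log (P xᵢ / Q xᵢ)) • Pⁿ` on its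
acceptance region. Its Type I error is a lower deviation of a sum of `n` i.i.d. variables with
values in `[-C, C]`, `C = C_X(P, Q)`, so Chernoff's bound combined with Hoeffding's lemma gives at
most `exp (-n δ² / (2 C²))`, which equals `ε_n` for `δ = C √(2 log (1 / ε_n) / n)`. -/

open Finset Filter Real
open scoped BigOperators Classical ENNReal

/-- The n-fold product (i.i.d.) probability mass function on `Fin n → X`. -/
noncomputable def prodP {X : Type*} [Fintype X] (P : X → ℝ) (n : ℕ) (x : Fin n → X) : ℝ :=
  ∏ i, P (x i)

/-- Kullback–Leibler divergence (natural logarithm). -/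
noncomputable def KL {X : Type*} [Fintype X] (P Q : X → ℝ) : ℝ :=
  ∑ x, P x * Real.log (P x / Q x)

/-- `C_X(P,Q) = sup_{x : P(x) > 0} |log (P(x)/Q(x))|`. -/
noncomputable def Cx {X : Type*} [Fintype X] (P Q : X → ℝ) : ℝ :=
  ⨆ x : {x : X // 0 < P x}, |Real.log (P x.1 / Q x.1)|

/-- Minimal Type II error probability under a Type I error constraint `ε`. -/
noncomputable def beta {X : Type*} [Fintype X] [DecidableEq X] (P Q : X → ℝ) (n : ℕ)
    (ε : ℝ) : ℝ :=
  sInf {b : ℝ | ∃ A : Finset (Fin n → X),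
    (∑ x ∈ Aᶜ, prodP P n x) ≤ ε ∧ b = ∑ x ∈ A, prodP Q n x}

section ProductDistribution

variable {X : Type*} [Fintype X] {P : X → ℝ}

lemma prodP_nonneg (hP0 : ∀ x, 0 ≤ P x) (n : ℕ) (x : Fin n → X) : 0 ≤ prodP P n x :=
  prod_nonneg fun i _ ↦ hP0 (x i)

lemma prodP_pos_iff (hP0 : ∀ x, 0 ≤ P x) {n : ℕ} {x : Fin n → X} :
    0 < prodP P n x ↔ ∀ i, 0 < P (x i) := by
  refine ⟨fun h i ↦ (hP0 (x i)).lt_of_ne fun h0 ↦ h.ne' ?_, fun h ↦ prod_pos fun i _ ↦ h i⟩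
  exact prod_eq_zero (mem_univ i) h0.symm

lemma sum_prodP (hP1 : ∑ x, P x = 1) (n : ℕ) : ∑ x, prodP P n x = 1 := by
  simp only [prodP, ← Fintype.sum_pow, hP1, one_pow]

end ProductDistribution

open MeasureTheory ProbabilityTheory NNReal in
theorem sum_mul_exp_le_of_mem_Icc {X : Type*} [Fintype X] {P Z : X → ℝ}
    (hP0 : ∀ x, 0 ≤ P x) (hP1 : ∑ x, P x = 1) {a b : ℝ}
    (hZ : ∀ x, 0 < P x → Z x ∈ Set.Icc a b) (t : ℝ) :
    ∑ x, P x * exp (t * Z x) ≤ exp (t * ∑ x, P x * Z x + (b - a) ^ 2 * t ^ 2 / 8) := by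
  let _ : MeasurableSpace X := ⊤
  let p : PMF X := PMF.ofFintype (fun x ↦ ENNReal.ofReal (P x)) <| by
    rw [← ENNReal.ofReal_sum_of_nonneg fun x _ ↦ hP0 x, hP1, ENNReal.ofReal_one]
  have hint (f : X → ℝ) : ∫ x, f x ∂p.toMeasure = ∑ x, P x * f x := by
    simp [PMF.integral_eq_sum, p, ENNReal.toReal_ofReal (hP0 _)]
  have hae : ∀ᵐ x ∂p.toMeasure, Z x ∈ Set.Icc a b := by
    rw [ae_iff, PMF.toMeasure_apply_eq_zero_iff _ MeasurableSet.of_discrete]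
    refine Set.disjoint_left.2 fun x hx hZx ↦ hZx (hZ x ?_)
    rwa [PMF.mem_support_iff, PMF.ofFintype_apply, ← pos_iff_ne_zero, ENNReal.ofReal_pos] at hx
  have hmgf := (hasSubgaussianMGF_of_mem_Icc Measurable.of_discrete.aemeasurable hae).mgf_le t
  have hparam : (((‖b - a‖₊ / 2) ^ 2 : ℝ≥0) : ℝ) = (b - a) ^ 2 / 4 := by
    push_cast
    rw [Real.norm_eq_abs, div_pow, sq_abs]
    norm_num
  rw [mgf, hint, hint, hparam] at hmgf
  set m := ∑ x, P x * Z x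
  have hcenter : ∑ x, P x * exp (t * (Z x - m)) = exp (-(t * m)) * ∑ x, P x * exp (t * Z x) := by
    rw [mul_sum]
    refine sum_congr rfl fun x _ ↦ ?_
    rw [mul_sub, sub_eq_add_neg, exp_add]
    ring
  calc ∑ x, P x * exp (t * Z x) = exp (t * m) * (exp (-(t * m)) * ∑ x, P x * exp (t * Z x)) := by
        rw [← mul_assoc, ← exp_add, add_neg_cancel, exp_zero, one_mul]
    _ ≤ exp (t * m) * exp ((b - a) ^ 2 / 4 * t ^ 2 / 2) := by
        rw [← hcenter]
        gcongr
    _ = exp (t * m + (b - a) ^ 2 * t ^ 2 / 8) := by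
        rw [← exp_add]
        ring_nf

section Tail

variable {X : Type*} [Fintype X] {P : X → ℝ}

theorem sum_prodP_sum_le_le_exp_mul_pow (hP0 : ∀ x, 0 ≤ P x) (Z : X → ℝ) (n : ℕ) {s t : ℝ}
    (ht : 0 ≤ t) :
    ∑ x with ∑ i, Z (x i) ≤ s, prodP P n x ≤ exp (t * s) * (∑ y, P y * exp (-(t * Z y))) ^ n := by
  calc ∑ x with ∑ i, Z (x i) ≤ s, prodP P n x
      ≤ ∑ x with ∑ i, Z (x i) ≤ s, prodP P n x * exp (t * (s - ∑ i, Z (x i))) := by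
        refine sum_le_sum fun x hx ↦ le_mul_of_one_le_right (prodP_nonneg hP0 n x) ?_
        exact one_le_exp (mul_nonneg ht (sub_nonneg.2 (mem_filter.1 hx).2))
    _ ≤ ∑ x, prodP P n x * exp (t * (s - ∑ i, Z (x i))) :=
        sum_le_sum_of_subset_of_nonneg (filter_subset _ _)
          fun x _ _ ↦ mul_nonneg (prodP_nonneg hP0 n x) (exp_nonneg _)
    _ = exp (t * s) * (∑ y, P y * exp (-(t * Z y))) ^ n := by
        rw [Fintype.sum_pow, mul_sum]
        refine sum_congr rfl fun x _ ↦ ?_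
        rw [prodP, prod_mul_distrib, ← exp_sum, mul_sub, sub_eq_add_neg, exp_add, mul_sum,
          ← sum_neg_distrib]
        ring

theorem sum_prodP_sum_le_le_exp (hP0 : ∀ x, 0 ≤ P x) (hP1 : ∑ x, P x = 1) {Z : X → ℝ}
    {a b : ℝ} (hZ : ∀ x, 0 < P x → Z x ∈ Set.Icc a b) (hab : a < b) (n : ℕ) {δ : ℝ}
    (hδ : 0 ≤ δ) :
    ∑ x with ∑ i, Z (x i) ≤ n * (∑ y, P y * Z y - δ), prodP P n x
      ≤ exp (-(2 * n * δ ^ 2 / (b - a) ^ 2)) := by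
  set m := ∑ y, P y * Z y
  set t := 4 * δ / (b - a) ^ 2
  have hZneg : ∀ x, 0 < P x → -Z x ∈ Set.Icc (-b) (-a) := fun x hx ↦
    ⟨neg_le_neg (hZ x hx).2, neg_le_neg (hZ x hx).1⟩
  have hmgf := sum_mul_exp_le_of_mem_Icc hP0 hP1 hZneg t
  calc ∑ x with ∑ i, Z (x i) ≤ n * (m - δ), prodP P n x
      ≤ exp (t * (n * (m - δ))) * (∑ y, P y * exp (-(t * Z y))) ^ n :=
        sum_prodP_sum_le_le_exp_mul_pow hP0 Z n (by positivity)
    _ ≤ exp (t * (n * (m - δ))) * exp (t * ∑ y, P y * -Z y + (-a - -b) ^ 2 * t ^ 2 / 8) ^ n := by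
        simp only [mul_neg] at hmgf ⊢
        gcongr
        exact sum_nonneg fun y _ ↦ mul_nonneg (hP0 y) (exp_nonneg _)
    _ = exp (-(2 * n * δ ^ 2 / (b - a) ^ 2)) := by
        rw [← exp_nat_mul, ← exp_add]
        congr 1
        have hba : b - a ≠ 0 := sub_ne_zero.2 hab.ne'
        simp only [mul_neg, sum_neg_distrib, m, t]
        field_simp
        ring

end Tail

lemma pos_of_absolutelyContinuous {X : Type*} {P Q : X → ℝ} (hQ0 : ∀ x, 0 ≤ Q x)
    (hac : ∀ x, Q x = 0 → P x = 0) {x : X} (hx : 0 < P x) : 0 < Q x :=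
  (hQ0 x).lt_of_ne fun h ↦ hx.ne' (hac x h.symm)

section Testing

variable {X : Type*} [Fintype X] {P Q : X → ℝ}

lemma abs_log_div_le_Cx {x : X} (hx : 0 < P x) : |log (P x / Q x)| ≤ Cx P Q :=
  le_ciSup (f := fun y : {y // 0 < P y} ↦ |log (P y / Q y)|) (Set.finite_range _).bddAbove ⟨x, hx⟩

lemma KL_le_Cx (hP0 : ∀ x, 0 ≤ P x) (hP1 : ∑ x, P x = 1) : KL P Q ≤ Cx P Q := by
  calc KL P Q ≤ ∑ x, P x * Cx P Q := by
        refine sum_le_sum fun x _ ↦ ?_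
        rcases (hP0 x).eq_or_lt with hx | hx
        · simp [← hx]
        · exact mul_le_mul_of_nonneg_left ((le_abs_self _).trans (abs_log_div_le_Cx hx)) hx.le
    _ = Cx P Q := by rw [← sum_mul, hP1, one_mul]

-- Restricting to the support of `P` keeps the junk value `log 0 = 0` out of the log-likelihood
-- ratio.
noncomputable def llrTest (P Q : X → ℝ) (n : ℕ) (γ : ℝ) : Finset (Fin n → X) :=
  {x | (∀ i, 0 < P (x i)) ∧ γ ≤ ∑ i, log (P (x i) / Q (x i))}

theorem sum_prodP_llrTest_le (hP0 : ∀ x, 0 ≤ P x) (hP1 : ∑ x, P x = 1) (hQ0 : ∀ x, 0 ≤ Q x)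
    (hac : ∀ x, Q x = 0 → P x = 0) (n : ℕ) (γ : ℝ) :
    ∑ x ∈ llrTest P Q n γ, prodP Q n x ≤ exp (-γ) := by
  have hratio : ∀ x ∈ llrTest P Q n γ, prodP Q n x ≤ exp (-γ) * prodP P n x := by
    intro x hx
    obtain ⟨hPx, hγ⟩ := (mem_filter.1 hx).2
    have hQx i : 0 < Q (x i) := pos_of_absolutelyContinuous hQ0 hac (hPx i)
    have hPQ : prodP P n x = exp (∑ i, log (P (x i) / Q (x i))) * prodP Q n x := by
      rw [exp_sum, prodP, prodP, ← prod_mul_distrib]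
      refine prod_congr rfl fun i _ ↦ ?_
      rw [exp_log (div_pos (hPx i) (hQx i)), div_mul_cancel₀ _ (hQx i).ne']
    rw [hPQ, ← mul_assoc, ← exp_add]
    exact le_mul_of_one_le_left (prodP_nonneg hQ0 n x) (one_le_exp (by linarith))
  calc ∑ x ∈ llrTest P Q n γ, prodP Q n x ≤ exp (-γ) * ∑ x ∈ llrTest P Q n γ, prodP P n x := by
        rw [mul_sum]
        exact sum_le_sum hratio
    _ ≤ exp (-γ) * ∑ x, prodP P n x := by
        gcongr
        · exact fun x _ _ ↦ prodP_nonneg hP0 n x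
        · exact subset_univ _
    _ = exp (-γ) := by rw [sum_prodP hP1, mul_one]

theorem sum_compl_llrTest_le [DecidableEq X] (hP0 : ∀ x, 0 ≤ P x) (hP1 : ∑ x, P x = 1)
    (hC : 0 < Cx P Q) (n : ℕ) {δ : ℝ} (hδ : 0 ≤ δ) :
    ∑ x ∈ (llrTest P Q n (n * (KL P Q - δ)))ᶜ, prodP P n x
      ≤ exp (-(n * δ ^ 2 / (2 * Cx P Q ^ 2))) := by
  set L : X → ℝ := fun y ↦ log (P y / Q y)
  have hL : ∀ y, 0 < P y → L y ∈ Set.Icc (-Cx P Q) (Cx P Q) := fun y hy ↦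
    abs_le.1 (abs_log_div_le_Cx hy)
  rw [← sum_filter_of_ne (p := fun x : Fin n → X ↦ ∀ i, 0 < P (x i))
    fun x _ hx ↦ (prodP_pos_iff hP0).1 ((prodP_nonneg hP0 n x).lt_of_ne' hx)]
  calc ∑ x ∈ (llrTest P Q n (n * (KL P Q - δ)))ᶜ with ∀ i, 0 < P (x i), prodP P n x
      ≤ ∑ x with ∑ i, L (x i) ≤ n * (∑ y, P y * L y - δ), prodP P n x := by
        refine sum_le_sum_of_subset_of_nonneg (fun x hx ↦ ?_) fun x _ _ ↦ prodP_nonneg hP0 n x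
        simp only [llrTest, mem_filter, mem_compl, mem_univ, true_and, not_and, not_le] at hx ⊢
        exact (hx.1 hx.2).le
    _ ≤ exp (-(2 * n * δ ^ 2 / (Cx P Q - -Cx P Q) ^ 2)) :=
        sum_prodP_sum_le_le_exp hP0 hP1 hL (by linarith) n hδ
    _ = exp (-(n * δ ^ 2 / (2 * Cx P Q ^ 2))) := by
        congr 2
        field_simp
        ring

lemma beta_le_of_sum_compl_le [DecidableEq X] (hQ0 : ∀ x, 0 ≤ Q x) {n : ℕ} {ε : ℝ}
    {A : Finset (Fin n → X)} (hA : ∑ x ∈ Aᶜ, prodP P n x ≤ ε) :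
    beta P Q n ε ≤ ∑ x ∈ A, prodP Q n x := by
  refine csInf_le ⟨0, ?_⟩ ⟨A, hA, rfl⟩
  rintro _ ⟨B, -, rfl⟩
  exact sum_nonneg fun x _ ↦ prodP_nonneg hQ0 n x

theorem beta_pos [DecidableEq X] (hP0 : ∀ x, 0 ≤ P x) (hP1 : ∑ x, P x = 1)
    (hQ0 : ∀ x, 0 ≤ Q x) (hac : ∀ x, Q x = 0 → P x = 0) (n : ℕ) {ε : ℝ} (hε0 : 0 ≤ ε)
    (hε1 : ε < 1) : 0 < beta P Q n ε := by
  rw [beta]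
  set S := {b : ℝ | ∃ A : Finset (Fin n → X),
    (∑ x ∈ Aᶜ, prodP P n x) ≤ ε ∧ b = ∑ x ∈ A, prodP Q n x}
  have hne : S.Nonempty := ⟨_, univ, by simpa using hε0, rfl⟩
  have hfin : S.Finite :=
    (Set.finite_range fun A : Finset (Fin n → X) ↦ ∑ x ∈ A, prodP Q n x).subset
      fun _ ⟨A, _, hb⟩ ↦ ⟨A, hb.symm⟩
  obtain ⟨B, hB, hβ⟩ := hne.csInf_mem hfin
  rw [hβ]
  have hmassB : 0 < ∑ x ∈ B, prodP P n x := by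
    linarith [sum_add_sum_compl B (prodP P n), sum_prodP hP1 n]
  obtain ⟨x, hxB, hx⟩ := exists_lt_of_sum_lt (f := fun _ ↦ (0 : ℝ)) (by simpa using hmassB)
  have hQx : 0 < prodP Q n x := (prodP_pos_iff hQ0).2 fun i ↦
    pos_of_absolutelyContinuous hQ0 hac ((prodP_pos_iff hP0).1 hx i)
  exact hQx.trans_le (single_le_sum (fun y _ ↦ prodP_nonneg hQ0 n y) hxB)

end Testing

theorem achievability_finite_length_bound_general
    {X : Type*} [Fintype X] [DecidableEq X] (P Q : X → ℝ)
    (hP0 : ∀ x, 0 ≤ P x) (hP1 : ∑ x, P x = 1)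
    (hQ0 : ∀ x, 0 ≤ Q x)
    (hac : ∀ x, Q x = 0 → P x = 0) (hD : 0 < KL P Q)
    (ε : ℕ → ℝ) (hεpos : ∀ n, 0 < ε n) (hε1 : ∀ n, ε n < 1) :
    ∀ᶠ n : ℕ in atTop,
      KL P Q - Cx P Q * Real.sqrt (2 * Real.log (1 / ε n) / n)
        ≤ -(1 / n : ℝ) * Real.log (beta P Q n (ε n)) := by
  filter_upwards [eventually_gt_atTop 0] with n hn
  have hn_pos : (0 : ℝ) < n := Nat.cast_pos.2 hn
  have hC : 0 < Cx P Q := hD.trans_le (KL_le_Cx hP0 hP1)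
  have hlog : 0 < log (1 / ε n) := log_pos ((one_lt_div (hεpos n)).2 (hε1 n))
  set δ := Cx P Q * √(2 * log (1 / ε n) / n)
  have htypeI : ∑ x ∈ (llrTest P Q n (n * (KL P Q - δ)))ᶜ, prodP P n x ≤ ε n := by
    refine (sum_compl_llrTest_le hP0 hP1 hC n (by positivity)).trans_eq ?_
    rw [mul_pow, sq_sqrt (by positivity)]
    field_simp
    rw [one_div, log_inv, neg_neg, exp_log (hεpos n)]
  have hβ : beta P Q n (ε n) ≤ exp (-(n * (KL P Q - δ))) :=
    (beta_le_of_sum_compl_le hQ0 htypeI).trans (sum_prodP_llrTest_le hP0 hP1 hQ0 hac n _)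
  have hlogβ := log_le_log (beta_pos hP0 hP1 hQ0 hac n (hεpos n).le (hε1 n)) hβ
  rw [log_exp] at hlogβ
  rw [neg_mul, one_div, ← div_eq_inv_mul, le_neg, div_le_iff₀ hn_pos]
  linarith

theorem achievability_finite_length_bound
    {X : Type*} [Fintype X] [DecidableEq X] (P Q : X → ℝ)
    (hP0 : ∀ x, 0 ≤ P x) (hP1 : ∑ x, P x = 1)
    (hQ0 : ∀ x, 0 ≤ Q x) (hQ1 : ∑ x, Q x = 1)
    (hac : ∀ x, Q x = 0 → P x = 0) (hD : 0 < KL P Q)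
    (ε : ℕ → ℝ) (hεpos : ∀ n, 0 < ε n) (hε1 : ∀ n, ε n < 1)
    (hsub : ∀ r > 0, Tendsto (fun n : ℕ => (1 / ε n) * Real.exp (-(r * n))) atTop (nhds 0)) :
    ∀ᶠ n : ℕ in atTop,
      KL P Q - Cx P Q * Real.sqrt (2 * Real.log (1 / ε n) / n)
        ≤ -(1 / n : ℝ) * Real.log (beta P Q n (ε n)) :=
  achievability_finite_length_bound_general P Q hP0 hP1 hQ0 hac hD ε hεpos hε1
end

section
/- (Stein's lemma) For any fixed ε ∈ (0,1), the optimal Type II error satisfies lim_{n→∞} -(1/n) log β_n(ε) = D(P‖Q). -/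
open Finset Filter Real
open scoped BigOperators Classical ENNReal

section SteinAux
set_option linter.unusedSectionVars false
variable {X : Type*} [Fintype X] [DecidableEq X]


lemma sum_prod_pi (n : ℕ) (g : Fin n → X → ℝ) :
    ∑ x : Fin n → X, ∏ i, g i (x i) = ∏ i, ∑ a, g i a := by
  rw [Finset.prod_univ_sum]
  simp [Fintype.piFinset_univ]

-- single marginal
lemma marg_one (P : X → ℝ) (hP1 : ∑ x, P x = 1) (n : ℕ) (f : X → ℝ) (i : Fin n) :
    ∑ x : Fin n → X, (∏ k, P (x k)) * f (x i) = ∑ a, P a * f a := by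
  have key : ∀ x : Fin n → X, (∏ k, P (x k)) * f (x i)
      = ∏ k, (P (x k) * (if k = i then f (x k) else 1)) := by
    intro x
    rw [Finset.prod_mul_distrib]
    congr 1
    rw [Finset.prod_ite_eq' univ i (fun k => f (x k))]
    simp
  calc ∑ x : Fin n → X, (∏ k, P (x k)) * f (x i)
      = ∑ x : Fin n → X, ∏ k, (P (x k) * (if k = i then f (x k) else 1)) := by
        exact Finset.sum_congr rfl fun x _ => key x
    _ = ∏ k, ∑ a, (P a * (if k = i then f a else 1)) := by
        exact sum_prod_pi n (fun k a => P a * (if k = i then f a else 1))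
    _ = ∑ a, P a * f a := by
        rw [Finset.prod_eq_single i]
        · simp
        · intro k _ hk; simp [hk, hP1]
        · simp

-- cross marginal
lemma marg_two (P : X → ℝ) (hP1 : ∑ x, P x = 1) (n : ℕ) (f g : X → ℝ) (i j : Fin n)
    (hij : i ≠ j) :
    ∑ x : Fin n → X, (∏ k, P (x k)) * (f (x i) * g (x j))
      = (∑ a, P a * f a) * (∑ a, P a * g a) := by
  have key : ∀ x : Fin n → X, (∏ k, P (x k)) * (f (x i) * g (x j))
      = ∏ k, (P (x k) * ((if k = i then f (x k) else 1) * (if k = j then g (x k) else 1))) := by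
    intro x
    rw [Finset.prod_mul_distrib, Finset.prod_mul_distrib]
    rw [Finset.prod_ite_eq' univ i (fun k => f (x k)),
        Finset.prod_ite_eq' univ j (fun k => g (x k))]
    simp [mul_assoc]
  rw [Finset.sum_congr rfl fun x _ => key x,
      sum_prod_pi n (fun k a => P a * ((if k = i then f a else 1) * (if k = j then g a else 1)))]
  have hval : ∀ k : Fin n, (∑ a, P a * ((if k = i then f a else 1) * (if k = j then g a else 1)))
      = (if k = i then (∑ a, P a * f a) else if k = j then (∑ a, P a * g a) else 1) := by
    intro k
    by_cases h1 : k = i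
    · subst h1
      simp [hij, hP1]
    · by_cases h2 : k = j
      · subst h2; simp [h1, hP1]
      · simp [h1, h2, hP1]
  rw [Finset.prod_congr rfl fun k _ => hval k]
  have hsplit : ∀ k : Fin n,
      (if k = i then (∑ a, P a * f a) else if k = j then (∑ a, P a * g a) else 1)
      = (if k = i then (∑ a, P a * f a) else 1) * (if k = j then (∑ a, P a * g a) else 1) := by
    intro k
    by_cases h1 : k = i
    · subst h1; simp [hij]
    · by_cases h2 : k = j <;> simp [h1, h2, hij.symm]
  rw [Finset.prod_congr rfl fun k _ => hsplit k, Finset.prod_mul_distrib,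
      Finset.prod_ite_eq' univ i (fun _ => (∑ a, P a * f a)),
      Finset.prod_ite_eq' univ j (fun _ => (∑ a, P a * g a))]
  simp

lemma second_moment (P : X → ℝ) (hP1 : ∑ x, P x = 1) (n : ℕ) (h : X → ℝ)
    (hmean : ∑ a, P a * h a = 0) :
    ∑ x : Fin n → X, (∏ k, P (x k)) * ((∑ i, h (x i)) * (∑ i, h (x i)))
      = n * ∑ a, P a * (h a * h a) := by
  have expand : ∀ x : Fin n → X, (∏ k, P (x k)) * ((∑ i, h (x i)) * (∑ i, h (x i)))
      = ∑ i, ∑ j, (∏ k, P (x k)) * (h (x i) * h (x j)) := by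
    intro x
    rw [Finset.sum_mul_sum]
    simp [Finset.mul_sum]
  rw [Finset.sum_congr rfl fun x _ => expand x]
  rw [Finset.sum_comm]
  have swap2 : ∀ i : Fin n, ∑ x : Fin n → X, ∑ j, (∏ k, P (x k)) * (h (x i) * h (x j))
      = ∑ j, ∑ x : Fin n → X, (∏ k, P (x k)) * (h (x i) * h (x j)) := fun i => Finset.sum_comm
  rw [Finset.sum_congr rfl fun i _ => swap2 i]
  have inner : ∀ i : Fin n,
      ∑ j, ∑ x : Fin n → X, (∏ k, P (x k)) * (h (x i) * h (x j)) = ∑ a, P a * (h a * h a) := by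
    intro i
    rw [← Finset.add_sum_erase univ _ (Finset.mem_univ i)]
    have h1 : ∑ x : Fin n → X, (∏ k, P (x k)) * (h (x i) * h (x i))
        = ∑ a, P a * (h a * h a) := by
      simpa using marg_one P hP1 n (fun a => h a * h a) i
    have h2 : ∀ j ∈ univ.erase i,
        ∑ x : Fin n → X, (∏ k, P (x k)) * (h (x i) * h (x j)) = 0 := by
      intro j hj
      have hij : i ≠ j := Ne.symm (Finset.mem_erase.mp hj).1
      rw [marg_two P hP1 n h h i j hij, hmean]
      ring
    rw [h1, Finset.sum_eq_zero h2]
    ring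
  rw [Finset.sum_congr rfl fun i _ => inner i]
  simp [Finset.sum_const, Finset.card_univ, nsmul_eq_mul]

lemma cheby (P : X → ℝ) (hP0 : ∀ x, 0 ≤ P x) (hP1 : ∑ x, P x = 1) (n : ℕ) (hn : 0 < n)
    (f : X → ℝ) (δ : ℝ) (hδ : 0 < δ) :
    ∑ x ∈ (univ.filter fun x : Fin n → X =>
        |(∑ i, f (x i)) - n * (∑ a, P a * f a)| ≤ n * δ)ᶜ, (∏ k, P (x k))
      ≤ (∑ a, P a * ((f a - ∑ b, P b * f b) * (f a - ∑ b, P b * f b))) / (n * δ^2) := by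
  set μ := ∑ a, P a * f a with hμ
  set h : X → ℝ := fun a => f a - μ with hh
  have hmean : ∑ a, P a * h a = 0 := by
    simp only [hh, mul_sub, Finset.sum_sub_distrib, ← Finset.sum_mul, hP1]
    ring
  set S : (Fin n → X) → ℝ := fun x => ∑ i, h (x i) with hS
  have hSrw : ∀ x : Fin n → X, (∑ i, f (x i)) - n * μ = S x := by
    intro x
    simp [hS, hh, Finset.sum_sub_distrib, Finset.sum_const, Finset.card_univ, nsmul_eq_mul]
  have M := second_moment P hP1 n h hmean
  have hn' : (0:ℝ) < n := by exact_mod_cast hn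
  have hnd : (0:ℝ) < ((n:ℝ)*δ)^2 := by positivity
  have hnonneg : ∀ x : Fin n → X, 0 ≤ ∏ k, P (x k) := fun x => Finset.prod_nonneg fun k _ => hP0 _
  calc ∑ x ∈ (univ.filter fun x : Fin n → X => |(∑ i, f (x i)) - n * μ| ≤ n * δ)ᶜ, (∏ k, P (x k))
      ≤ ∑ x ∈ (univ.filter fun x : Fin n → X => |(∑ i, f (x i)) - n * μ| ≤ n * δ)ᶜ,
          (∏ k, P (x k)) * ((S x * S x) / ((n*δ)^2)) := by
        apply Finset.sum_le_sum
        intro x hx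
        have hx' : ¬ |(∑ i, f (x i)) - n * μ| ≤ n * δ := by
          simpa using hx
        have habs : (n:ℝ) * δ ≤ |S x| := by
          rw [← hSrw x]; exact le_of_lt (not_le.mp hx')
        have hsq : ((n:ℝ)*δ)^2 ≤ S x * S x := by
          have := mul_self_le_mul_self (by positivity) habs
          calc ((n:ℝ)*δ)^2 = ((n:ℝ)*δ) * ((n:ℝ)*δ) := sq ((n:ℝ)*δ)
            _ ≤ |S x| * |S x| := this
            _ = S x * S x := abs_mul_abs_self _
        have h1 : (1:ℝ) ≤ (S x * S x) / ((n*δ)^2) := (one_le_div hnd).mpr hsq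
        exact le_mul_of_one_le_right (hnonneg x) h1
    _ ≤ ∑ x : Fin n → X, (∏ k, P (x k)) * ((S x * S x) / ((n*δ)^2)) := by
        apply Finset.sum_le_sum_of_subset_of_nonneg (Finset.subset_univ _)
        intro x _ _
        exact mul_nonneg (hnonneg x) (div_nonneg (mul_self_nonneg _) (le_of_lt hnd))
    _ = (∑ x : Fin n → X, (∏ k, P (x k)) * (S x * S x)) / ((n*δ)^2) := by
        simp only [← mul_div_assoc]
        rw [← Finset.sum_div]
    _ = ((n:ℝ) * ∑ a, P a * (h a * h a)) / ((n*δ)^2) := by rw [M]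
    _ = (∑ a, P a * (h a * h a)) / ((n:ℝ) * δ^2) := by
        field_simp



lemma total_one (P : X → ℝ) (hP1 : ∑ x, P x = 1) (n : ℕ) :
    ∑ x : Fin n → X, ∏ k, P (x k) = 1 := by
  rw [sum_prod_pi n (fun _ a => P a)]
  simp [hP1]

lemma prodQ_eq (P Q : X → ℝ) (hP0 : ∀ x, 0 ≤ P x) (hQ0 : ∀ x, 0 ≤ Q x)
    (hac : ∀ x, Q x = 0 → P x = 0) (n : ℕ) (x : Fin n → X)
    (hx : 0 < ∏ k, P (x k)) :
    ∏ k, Q (x k) = (∏ k, P (x k)) * Real.exp (-(∑ i, Real.log (P (x i) / Q (x i)))) := by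
  have hPk : ∀ k, 0 < P (x k) := by
    intro k
    rcases (hP0 (x k)).lt_or_eq with h | h
    · exact h
    · exfalso
      have h0 : ∏ k, P (x k) = 0 := Finset.prod_eq_zero (Finset.mem_univ k) h.symm
      rw [h0] at hx
      exact lt_irrefl 0 hx
  have hQk : ∀ k, 0 < Q (x k) := by
    intro k
    rcases (hQ0 (x k)).lt_or_eq with h | h
    · exact h
    · exact absurd (hac _ h.symm) (ne_of_gt (hPk k))
  have hexp : ∀ k : Fin n, Real.exp (Real.log (P (x k) / Q (x k))) = P (x k) / Q (x k) :=
    fun k => Real.exp_log (div_pos (hPk k) (hQk k))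
  rw [Real.exp_neg, Real.exp_sum, Finset.prod_congr rfl fun k _ => hexp k,
      ← Finset.prod_inv_distrib, ← Finset.prod_mul_distrib]
  refine Finset.prod_congr rfl fun k _ => ?_
  rw [inv_div]
  rw [mul_div_cancel₀ _ (ne_of_gt (hPk k))]


lemma sum_filter_pos_le (P : X → ℝ) (hP0 : ∀ x, 0 ≤ P x) (n : ℕ)
    (p : (Fin n → X) → Prop) :
    ∑ x ∈ (univ.filter fun x => p x ∧ 0 < ∏ k, P (x k))ᶜ, (∏ k, P (x k))
      ≤ ∑ x ∈ (univ.filter fun x => p x)ᶜ, (∏ k, P (x k)) := by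
  rw [Finset.compl_filter, Finset.compl_filter, Finset.sum_filter, Finset.sum_filter]
  apply Finset.sum_le_sum
  intro x _
  by_cases hp : p x
  · by_cases hpos : 0 < ∏ k, P (x k)
    · simp [hp, hpos]
    · have h0 : ∏ k, P (x k) = 0 :=
        le_antisymm (not_lt.mp hpos) (Finset.prod_nonneg fun k _ => hP0 _)
      simp [hp, h0]
  · simp [hp]

end SteinAux

theorem stein_lemma
    {X : Type*} [Fintype X] [DecidableEq X] (P Q : X → ℝ)
    (hP0 : ∀ x, 0 ≤ P x) (hP1 : ∑ x, P x = 1)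
    (hQ0 : ∀ x, 0 ≤ Q x) (hQ1 : ∑ x, Q x = 1)
    (hac : ∀ x, Q x = 0 → P x = 0) (hD : 0 < KL P Q)
    (ε : ℝ) (hε0 : 0 < ε) (hε1 : ε < 1) :
    Tendsto (fun n : ℕ => -(1 / n : ℝ) * Real.log (beta P Q n ε)) atTop
      (nhds (KL P Q)) := by
  classical
  set D := KL P Q with hDdef
  set L : X → ℝ := fun a => Real.log (P a / Q a) with hLdef
  have hmean : (∑ a, P a * L a) = D := by
    rw [hDdef]
    simp [KL, hLdef]
  set σ2 := ∑ a, P a * ((L a - D) * (L a - D)) with hσ2def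
  -- Chebyshev bound on the complement of the (positive-probability) typical set
  have key : ∀ (δ : ℝ), 0 < δ → ∀ (n : ℕ), 0 < n →
      ∑ x ∈ (univ.filter fun x : Fin n → X =>
          (|(∑ i, L (x i)) - n * D| ≤ n * δ ∧ 0 < ∏ k, P (x k)))ᶜ, (∏ k, P (x k))
        ≤ σ2 / (n * δ^2) := by
    intro δ hδ n hn
    refine le_trans (sum_filter_pos_le P hP0 n _) ?_
    have h := cheby P hP0 hP1 n hn L δ hδ
    rw [hmean] at h
    rw [← hσ2def] at h
    exact h
  have hbdd : ∀ n : ℕ, BddBelow {b : ℝ | ∃ A : Finset (Fin n → X),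
      (∑ x ∈ Aᶜ, prodP P n x) ≤ ε ∧ b = ∑ x ∈ A, prodP Q n x} := by
    intro n
    refine ⟨0, ?_⟩
    rintro b ⟨A, -, rfl⟩
    exact Finset.sum_nonneg fun x _ => Finset.prod_nonneg fun k _ => hQ0 _
  have hne : ∀ n : ℕ, ({b : ℝ | ∃ A : Finset (Fin n → X),
      (∑ x ∈ Aᶜ, prodP P n x) ≤ ε ∧ b = ∑ x ∈ A, prodP Q n x}).Nonempty := by
    intro n
    refine ⟨∑ x ∈ (univ : Finset (Fin n → X)), prodP Q n x, univ, ?_, rfl⟩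
    simp [le_of_lt hε0]
  have hto : ∀ (c δ : ℝ), 0 < δ → 0 < c →
      ∀ᶠ n : ℕ in atTop, σ2 / (n * δ^2) < c := by
    intro c δ hδ hc
    have ht : Tendsto (fun n : ℕ => σ2 / (n * δ^2)) atTop (nhds 0) := by
      have heq : (fun n : ℕ => σ2 / (n * δ^2)) = fun n : ℕ => (1/(n:ℝ)) * (σ2/δ^2) := by
        funext n
        rcases eq_or_ne ((n:ℝ)) 0 with h | h
        · simp [h]
        · field_simp
      rw [heq]
      simpa using tendsto_one_div_atTop_nhds_zero_nat.mul_const (σ2/δ^2)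
    exact ht.eventually (eventually_lt_nhds hc)
  -- achievability
  have upper : ∀ δ : ℝ, 0 < δ → ∀ᶠ n : ℕ in atTop,
      beta P Q n ε ≤ Real.exp (-(n * (D - δ))) := by
    intro δ hδ
    filter_upwards [hto ε δ hδ hε0, eventually_gt_atTop 0] with n hnε hn
    set T : Finset (Fin n → X) := univ.filter fun x : Fin n → X =>
        (|(∑ i, L (x i)) - n * D| ≤ n * δ ∧ 0 < ∏ k, P (x k)) with hT
    have h1 : (∑ x ∈ Tᶜ, prodP P n x) ≤ ε := by
      simp only [prodP]
      exact le_of_lt (lt_of_le_of_lt (key δ hδ n hn) hnε)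
    have h2 : (∑ x ∈ T, prodP Q n x) ≤ Real.exp (-(n * (D - δ))) := by
      simp only [prodP]
      have step1 : ∀ x ∈ T, (∏ i, Q (x i)) ≤ (∏ k, P (x k)) * Real.exp (-(n * (D - δ))) := by
        intro x hx
        obtain ⟨htyp, hpos⟩ := (Finset.mem_filter.mp hx).2
        rw [prodQ_eq P Q hP0 hQ0 hac n x hpos]
        refine mul_le_mul_of_nonneg_left ?_ (le_of_lt hpos)
        apply Real.exp_le_exp.mpr
        have h' : (n:ℝ) * D - n * δ ≤ ∑ i, L (x i) := by
          have := (abs_le.mp htyp).1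
          linarith
        have h'' : (n:ℝ) * (D - δ) ≤ ∑ i, L (x i) := by rw [mul_sub]; linarith
        linarith
      calc ∑ x ∈ T, ∏ i, Q (x i)
          ≤ ∑ x ∈ T, (∏ k, P (x k)) * Real.exp (-(n * (D - δ))) := Finset.sum_le_sum step1
        _ = (∑ x ∈ T, ∏ k, P (x k)) * Real.exp (-(n * (D - δ))) := by rw [Finset.sum_mul]
        _ ≤ 1 * Real.exp (-(n * (D - δ))) := by
            refine mul_le_mul_of_nonneg_right ?_ (Real.exp_nonneg _)
            have hsub : ∑ x ∈ T, ∏ k, P (x k) ≤ ∑ x : Fin n → X, ∏ k, P (x k) :=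
              Finset.sum_le_sum_of_subset_of_nonneg (Finset.subset_univ _)
                (fun x _ _ => Finset.prod_nonneg fun k _ => hP0 _)
            rwa [total_one P hP1 n] at hsub
        _ = Real.exp (-(n * (D - δ))) := one_mul _
    calc beta P Q n ε ≤ ∑ x ∈ T, prodP Q n x := csInf_le (hbdd n) ⟨T, h1, rfl⟩
      _ ≤ Real.exp (-(n * (D - δ))) := h2
  -- converse
  have hc2 : (0:ℝ) < (1-ε)/2 := by linarith
  have lower : ∀ δ : ℝ, 0 < δ → ∀ᶠ n : ℕ in atTop,
      Real.exp (-(n * (D + δ))) * ((1-ε)/2) ≤ beta P Q n ε := by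
    intro δ hδ
    filter_upwards [hto ((1-ε)/2) δ hδ hc2, eventually_gt_atTop 0] with n hnε hn
    refine le_csInf (hne n) ?_
    rintro b ⟨A, hA1, rfl⟩
    set T : Finset (Fin n → X) := univ.filter fun x : Fin n → X =>
        (|(∑ i, L (x i)) - n * D| ≤ n * δ ∧ 0 < ∏ k, P (x k)) with hT
    set B := A ∩ T with hB
    have hBsub : ∑ x ∈ B, prodP Q n x ≤ ∑ x ∈ A, prodP Q n x := by
      refine Finset.sum_le_sum_of_subset_of_nonneg Finset.inter_subset_left ?_
      intro x _ _
      exact Finset.prod_nonneg fun k _ => hQ0 _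
    have hmass : (1-ε)/2 ≤ ∑ x ∈ B, ∏ k, P (x k) := by
      have hsplit : (∑ x ∈ A ∩ T, (∏ k, P (x k))) + ∑ x ∈ A \ T, (∏ k, P (x k))
          = ∑ x ∈ A, ∏ k, P (x k) := Finset.sum_inter_add_sum_sdiff A T _
      have hdiff : ∑ x ∈ A \ T, (∏ k, P (x k)) ≤ σ2/(n*δ^2) := by
        refine le_trans (Finset.sum_le_sum_of_subset_of_nonneg ?_
          fun x _ _ => Finset.prod_nonneg fun k _ => hP0 _) (key δ hδ n hn)
        intro x hx
        exact Finset.mem_compl.mpr (Finset.mem_sdiff.mp hx).2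
      have hAmass : 1 - ε ≤ ∑ x ∈ A, ∏ k, P (x k) := by
        have htot : (∑ x ∈ A, (∏ k, P (x k))) + ∑ x ∈ Aᶜ, (∏ k, P (x k)) = 1 := by
          rw [Finset.sum_add_sum_compl]
          exact total_one P hP1 n
        have hA1' : ∑ x ∈ Aᶜ, (∏ k, P (x k)) ≤ ε := by
          simpa [prodP] using hA1
        linarith
      have : ∑ x ∈ B, (∏ k, P (x k)) = ∑ x ∈ A ∩ T, (∏ k, P (x k)) := by rw [hB]
      linarith [hnε.le]
    have hBlow : Real.exp (-(n*(D+δ))) * ((1-ε)/2) ≤ ∑ x ∈ B, prodP Q n x := by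
      simp only [prodP]
      have step : ∀ x ∈ B, Real.exp (-(n*(D+δ))) * (∏ k, P (x k)) ≤ ∏ i, Q (x i) := by
        intro x hx
        have hxT := (Finset.mem_inter.mp hx).2
        obtain ⟨htyp, hpos⟩ := (Finset.mem_filter.mp hxT).2
        rw [prodQ_eq P Q hP0 hQ0 hac n x hpos, mul_comm]
        refine mul_le_mul_of_nonneg_left ?_ (le_of_lt hpos)
        apply Real.exp_le_exp.mpr
        have h' : ∑ i, L (x i) ≤ (n:ℝ) * D + n * δ := by
          have := (abs_le.mp htyp).2
          linarith
        have h'' : ∑ i, L (x i) ≤ (n:ℝ) * (D + δ) := by rw [mul_add]; linarith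
        linarith
      calc Real.exp (-(n*(D+δ))) * ((1-ε)/2)
          ≤ Real.exp (-(n*(D+δ))) * ∑ x ∈ B, (∏ k, P (x k)) :=
            mul_le_mul_of_nonneg_left hmass (Real.exp_nonneg _)
        _ = ∑ x ∈ B, Real.exp (-(n*(D+δ))) * (∏ k, P (x k)) := Finset.mul_sum _ _ _
        _ ≤ ∑ x ∈ B, ∏ i, Q (x i) := Finset.sum_le_sum step
    exact le_trans hBlow hBsub
  -- conclusion
  rw [Metric.tendsto_atTop]
  intro δ hδ
  have hδ3 : 0 < δ/3 := by linarith
  have E3 : ∀ᶠ n : ℕ in atTop, (1/(n:ℝ)) * (-Real.log ((1-ε)/2)) < δ/3 := by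
    have ht : Tendsto (fun n : ℕ => (1/(n:ℝ)) * (-Real.log ((1-ε)/2))) atTop (nhds 0) := by
      simpa using tendsto_one_div_atTop_nhds_zero_nat.mul_const (-Real.log ((1-ε)/2))
    exact ht.eventually (eventually_lt_nhds hδ3)
  have Eall := (upper (δ/3) hδ3).and ((lower (δ/3) hδ3).and (E3.and (eventually_gt_atTop 0)))
  rw [eventually_atTop] at Eall
  obtain ⟨N, hN⟩ := Eall
  refine ⟨N, fun n hn => ?_⟩
  obtain ⟨hup, hlo, h3, hn0⟩ := hN n hn
  have hn' : (0:ℝ) < n := by exact_mod_cast hn0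
  have hbpos : 0 < beta P Q n ε :=
    lt_of_lt_of_le (by positivity) hlo
  have hlog1 : Real.log (beta P Q n ε) ≤ -(n * (D - δ/3)) := by
    rw [Real.log_le_iff_le_exp hbpos]
    exact hup
  have hlog2 : -(n * (D + δ/3)) + Real.log ((1-ε)/2) ≤ Real.log (beta P Q n ε) := by
    have hll : Real.log (Real.exp (-(n * (D + δ/3))) * ((1-ε)/2))
        ≤ Real.log (beta P Q n ε) := Real.log_le_log (by positivity) hlo
    rwa [Real.log_mul (by positivity) (ne_of_gt hc2), Real.log_exp] at hll
  have key1 : D - δ/3 ≤ -(1/(n:ℝ)) * Real.log (beta P Q n ε) := by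
    have h1 : (n:ℝ) * (D - δ/3) ≤ -Real.log (beta P Q n ε) := by linarith
    have h2 := mul_le_mul_of_nonneg_left h1 (le_of_lt (one_div_pos.mpr hn'))
    calc D - δ/3 = (1/(n:ℝ)) * ((n:ℝ)*(D - δ/3)) := by field_simp
      _ ≤ (1/(n:ℝ)) * (-Real.log (beta P Q n ε)) := h2
      _ = -(1/(n:ℝ)) * Real.log (beta P Q n ε) := by ring
  have key2 : -(1/(n:ℝ)) * Real.log (beta P Q n ε)
      ≤ D + δ/3 + (1/(n:ℝ)) * (-Real.log ((1-ε)/2)) := by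
    have h1 : -Real.log (beta P Q n ε) ≤ (n:ℝ)*(D + δ/3) + (-Real.log ((1-ε)/2)) := by
      linarith
    have h2 := mul_le_mul_of_nonneg_left h1 (le_of_lt (one_div_pos.mpr hn'))
    calc -(1/(n:ℝ)) * Real.log (beta P Q n ε)
        = (1/(n:ℝ)) * (-Real.log (beta P Q n ε)) := by ring
      _ ≤ (1/(n:ℝ)) * ((n:ℝ)*(D + δ/3) + (-Real.log ((1-ε)/2))) := h2
      _ = D + δ/3 + (1/(n:ℝ)) * (-Real.log ((1-ε)/2)) := by
          field_simp
  have hdist : dist (-(1/(n:ℝ)) * Real.log (beta P Q n ε)) D < δ := by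
    rw [Real.dist_eq, abs_lt]
    constructor <;> linarith
  simpa using hdist
end

section
/- For any ε_n, δ > 0 with ε_n + P^n(A_{n,δ}^c) < 1, every test operating at Type I error at most ε_n has Type II error exponent at most D(P‖Q) + δ + (1/n)·log(1/(1 - ε_n - P^n(A_{n,δ}^c))); i.e., -(1/n) log β_n(ε_n) ≤ D(P‖Q) + δ + (1/n) log(1/(1-ε_n-P^n(A_{n,δ}^c))). -/
open Finset Filter Real
open scoped BigOperators Classical ENNReal

theorem converse_bound_general
    {X : Type*} [Fintype X] [DecidableEq X] (P Q : X → ℝ)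
    (hP0 : ∀ x, 0 ≤ P x) (hP1 : ∑ x, P x = 1)
    (hQ0 : ∀ x, 0 ≤ Q x) (hQ1 : ∑ x, Q x = 1)
    (hac : ∀ x, Q x = 0 → P x = 0)
    (n : ℕ) (hn : 1 ≤ n) (ε δ : ℝ) (hε : 0 < ε) (hδ : 0 < δ)
    (hsum : ε + (∑ x ∈ univ.filter (fun x : Fin n → X =>
        δ ≤ |(1 / n : ℝ) * Real.log (prodP P n x / prodP Q n x) - KL P Q|),
          prodP P n x) < 1) :
    -(1 / n : ℝ) * Real.log (beta P Q n ε)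
      ≤ KL P Q + δ
        + (1 / n : ℝ) * Real.log
            (1 / (1 - ε - ∑ x ∈ univ.filter (fun x : Fin n → X =>
                δ ≤ |(1 / n : ℝ) * Real.log (prodP P n x / prodP Q n x) - KL P Q|),
                  prodP P n x)) := by
  have hn' : (0:ℝ) < n := by exact_mod_cast hn
  set S := univ.filter (fun x : Fin n → X =>
      δ ≤ |(1 / n : ℝ) * Real.log (prodP P n x / prodP Q n x) - KL P Q|) with hS
  set m := ∑ x ∈ S, prodP P n x with hm
  set D := KL P Q with hD
  have hP0' : ∀ x : Fin n → X, 0 ≤ prodP P n x :=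
    fun x => Finset.prod_nonneg (fun i _ => hP0 (x i))
  have hQ0' : ∀ x : Fin n → X, 0 ≤ prodP Q n x :=
    fun x => Finset.prod_nonneg (fun i _ => hQ0 (x i))
  have hsumP : ∑ x : Fin n → X, prodP P n x = 1 := by
    have := (Finset.prod_univ_sum (fun _ : Fin n => (univ : Finset X))
      (fun _ y => P y)).symm
    simp only [Fintype.piFinset_univ] at this
    simp [prodP, this, hP1]
  have hc : 0 < 1 - ε - m := by linarith
  -- key pointwise bound off the atypical set
  have key : ∀ x : Fin n → X, x ∉ S →
      Real.exp (-((n:ℝ) * (D + δ))) * prodP P n x ≤ prodP Q n x := by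
    intro x hx
    rcases eq_or_lt_of_le (hP0' x) with h0 | hpos
    · rw [← h0, mul_zero]; exact hQ0' x
    · have hQpos : 0 < prodP Q n x := by
        have hne : ∀ i ∈ (univ : Finset (Fin n)), Q (x i) ≠ 0 := by
          intro i _ hq
          have hPzero : P (x i) = 0 := hac _ hq
          have : prodP P n x = 0 := by
            apply Finset.prod_eq_zero (Finset.mem_univ i) hPzero
          linarith
        apply Finset.prod_pos
        intro i hi
        exact lt_of_le_of_ne (hQ0 (x i)) (Ne.symm (hne i hi))
      have habs : |(1 / n : ℝ) * Real.log (prodP P n x / prodP Q n x) - D| < δ := by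
        simp only [hS, Finset.mem_filter, Finset.mem_univ, true_and, not_le] at hx
        exact hx
      have h1 : (1 / n : ℝ) * Real.log (prodP P n x / prodP Q n x) - D < δ :=
        lt_of_abs_lt habs
      have h2 : Real.log (prodP P n x / prodP Q n x) < (n:ℝ) * (D + δ) := by
        have := mul_lt_mul_of_pos_left (by linarith : (1 / n : ℝ) *
          Real.log (prodP P n x / prodP Q n x) < D + δ) hn'
        rw [← mul_assoc, mul_one_div, div_self (ne_of_gt hn'), one_mul] at this
        exact this
      have h3 : prodP P n x / prodP Q n x < Real.exp ((n:ℝ) * (D + δ)) := by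
        calc prodP P n x / prodP Q n x
            = Real.exp (Real.log (prodP P n x / prodP Q n x)) :=
              (Real.exp_log (div_pos hpos hQpos)).symm
          _ < Real.exp ((n:ℝ) * (D + δ)) := Real.exp_lt_exp.mpr h2
      have h4 : prodP P n x < Real.exp ((n:ℝ) * (D + δ)) * prodP Q n x :=
        (div_lt_iff₀ hQpos).mp h3
      have hmul : Real.exp (-((n:ℝ) * (D + δ))) * Real.exp ((n:ℝ) * (D + δ)) = 1 := by
        rw [← Real.exp_add]; simp
      nlinarith [Real.exp_pos (-((n:ℝ) * (D + δ))), Real.exp_pos ((n:ℝ) * (D + δ))]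
  set c := Real.exp (-((n:ℝ) * (D + δ))) * (1 - ε - m) with hcdef
  have hcpos : 0 < c := mul_pos (Real.exp_pos _) hc
  have hlb : ∀ b ∈ {b : ℝ | ∃ A : Finset (Fin n → X),
      (∑ x ∈ Aᶜ, prodP P n x) ≤ ε ∧ b = ∑ x ∈ A, prodP Q n x}, c ≤ b := by
    rintro b ⟨A, hA, rfl⟩
    have step1 : ∑ x ∈ A \ S, prodP Q n x ≤ ∑ x ∈ A, prodP Q n x :=
      Finset.sum_le_sum_of_subset_of_nonneg (Finset.sdiff_subset)
        (fun x _ _ => hQ0' x)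
    have step2 : Real.exp (-((n:ℝ) * (D + δ))) * ∑ x ∈ A \ S, prodP P n x
        ≤ ∑ x ∈ A \ S, prodP Q n x := by
      rw [Finset.mul_sum]
      apply Finset.sum_le_sum
      intro x hx
      exact key x (Finset.mem_sdiff.mp hx).2
    have step3 : 1 - ε - m ≤ ∑ x ∈ A \ S, prodP P n x := by
      have hcompl : ∑ x ∈ A \ S, prodP P n x + ∑ x ∈ (A \ S)ᶜ, prodP P n x = 1 := by
        rw [Finset.sum_add_sum_compl]; exact hsumP
      have hsub : (A \ S)ᶜ = Aᶜ ∪ S := by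
        ext y; simp only [Finset.mem_compl, Finset.mem_sdiff, Finset.mem_union]; tauto
      have hunion : ∑ x ∈ (A \ S)ᶜ, prodP P n x ≤
          (∑ x ∈ Aᶜ, prodP P n x) + ∑ x ∈ S, prodP P n x := by
        rw [hsub]
        have := Finset.sum_union_inter (s₁ := Aᶜ) (s₂ := S) (f := prodP P n)
        have hnn : 0 ≤ ∑ x ∈ Aᶜ ∩ S, prodP P n x :=
          Finset.sum_nonneg (fun x _ => hP0' x)
        linarith
      linarith
    calc c ≤ Real.exp (-((n:ℝ) * (D + δ))) * ∑ x ∈ A \ S, prodP P n x := by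
          exact mul_le_mul_of_nonneg_left step3 (le_of_lt (Real.exp_pos _))
      _ ≤ ∑ x ∈ A \ S, prodP Q n x := step2
      _ ≤ ∑ x ∈ A, prodP Q n x := step1
  have hne : {b : ℝ | ∃ A : Finset (Fin n → X),
      (∑ x ∈ Aᶜ, prodP P n x) ≤ ε ∧ b = ∑ x ∈ A, prodP Q n x}.Nonempty := by
    refine ⟨∑ x : Fin n → X, prodP Q n x, univ, ?_, rfl⟩
    simp [le_of_lt hε]
  have hbeta : c ≤ beta P Q n ε := le_csInf hne hlb
  have hbetapos : 0 < beta P Q n ε := lt_of_lt_of_le hcpos hbeta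
  have hlog : Real.log c ≤ Real.log (beta P Q n ε) := Real.log_le_log hcpos hbeta
  have hlogc : Real.log c = -((n:ℝ) * (D + δ)) + Real.log (1 - ε - m) := by
    rw [hcdef, Real.log_mul (ne_of_gt (Real.exp_pos _)) (ne_of_gt hc), Real.log_exp]
  have hlogdiv : Real.log (1 / (1 - ε - m)) = -Real.log (1 - ε - m) := by
    rw [one_div, Real.log_inv]
  rw [hlogdiv]
  have hfinal : -(1 / n : ℝ) * Real.log c = D + δ - (1 / n : ℝ) * Real.log (1 - ε - m) := by
    rw [hlogc]
    field_simp
    ring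
  have hmono : -(1 / n : ℝ) * Real.log (beta P Q n ε) ≤ -(1 / n : ℝ) * Real.log c := by
    have h1n : (0:ℝ) ≤ 1 / n := by positivity
    nlinarith
  linarith [hmono, hfinal.le, hfinal.ge]
end
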